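/- Let n be an odd integer with n ≥ 3 and let B = [b_{ij}] be an n×n real constant row-sum matrix with constant row-sum λ₁ (Be = λ₁e). For each j, let β_j and γ_j be, respectively, the opposite in sign of the ((n−1)/2)-th largest and of the ((n+1)/2)-th largest numbers among the n−1 off-diagonal entries b_{1j}, …, b_{j−1,j}, b_{j+1,j}, …, b_{nj} of column j. Let F = [b_{ij} + β_j] and G = [b_{ij} + γ_j], and set S = ∪_{j=1}^{n} (D̂_{F,j} ∩ D̂_{G,j}), where D̂_{F,j} and D̂_{G,j} are the j-th Gershgorin discs of the second type of F^T and G^T respectively (obtained from the j-th columns of F and G). Then S is contained in the Gershgorin region of the second type of B^T, and every complex eigenvalue λ of B with λ ≠ λ₁ belongs to S. -/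

import Mathlib

open Matrix
open scoped ENNReal

/-- Non-increasing (descending) sort of a list of reals. -/
noncomputable def sortDesc (l : List ℝ) : List ℝ := (l.insertionSort (· ≤ ·)).reverse

/-- Given the descending rearrangement `l` of `n` numbers, the sum of the largest
(about) half minus the sum of the smallest (about) half, skipping the middle
element when `n` is odd. -/
noncomputable def halfSumDiff (n : ℕ) (l : List ℝ) : ℝ :=
  if n % 2 = 1 then (l.take ((n - 1) / 2)).sum - (l.drop ((n + 1) / 2)).sum
  else (l.take (n / 2)).sum - (l.drop (n / 2)).sum

/-- Radius of the `i`-th Gershgorin disc of the second type of `M`, computed from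
the `i`-th row of `M` with the diagonal entry replaced by `0`. -/
noncomputable def secondTypeRadius {n : ℕ} (M : Matrix (Fin n) (Fin n) ℝ) (i : Fin n) : ℝ :=
  halfSumDiff n (sortDesc (List.ofFn fun j : Fin n => if j = i then 0 else M i j))

/-- The `i`-th Gershgorin disc of the second type of `M`. -/
noncomputable def secondTypeDisc {n : ℕ} (M : Matrix (Fin n) (Fin n) ℝ) (i : Fin n) : Set ℂ :=
  Metric.closedBall ((M i i : ℝ) : ℂ) (secondTypeRadius M i)

/-- The Gershgorin region of the second type of `M`. -/
noncomputable def secondTypeRegion {n : ℕ} (M : Matrix (Fin n) (Fin n) ℝ) : Set ℂ :=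
  ⋃ i : Fin n, secondTypeDisc M i

/-- `μ` is a (complex) eigenvalue of the real matrix `A`, i.e. a complex root of
its characteristic polynomial. -/
def IsEigenvalueC {n : ℕ} (A : Matrix (Fin n) (Fin n) ℝ) (μ : ℂ) : Prop :=
  ((A.map ((↑) : ℝ → ℂ)).charpoly).IsRoot μ

/-- The `k`-th largest element (1-indexed) among the `n - 1` off-diagonal entries of
column `j` of `B`. -/
noncomputable def kthLargestOffDiag {n : ℕ} (B : Matrix (Fin n) (Fin n) ℝ) (j : Fin n)
    (k : ℕ) : ℝ :=
  (sortDesc (((List.ofFn fun i : Fin n => B i j).eraseIdx j.val))).getD (k - 1) 0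

/-- The ℓ_p norm of a vector in ℝ^n. -/
noncomputable def lpNorm {n : ℕ} (p : ℝ≥0∞) (x : Fin n → ℝ) : ℝ :=
  @norm (PiLp p fun _ : Fin n => ℝ) _ ((WithLp.equiv p (∀ _ : Fin n, ℝ)).symm x)

/-- The seminorm-like quantity `τ_p(B)`: the supremum of `‖Bᵀ x‖_p` over all real
vectors `x` with `xᵀ e = 0` and `‖x‖_p = 1`. -/
noncomputable def tau {n : ℕ} (p : ℝ≥0∞) (B : Matrix (Fin n) (Fin n) ℝ) : ℝ :=
  sSup { t : ℝ | ∃ x : Fin n → ℝ, (∑ i, x i) = 0 ∧ lpNorm p x = 1 ∧ t = lpNorm p (Bᵀ *ᵥ x) }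

/-- The Ostrowski–Brauer set `Γ(M)` of a real square matrix `M`. -/
noncomputable def brauerSet {n : ℕ} (M : Matrix (Fin n) (Fin n) ℝ) : Set ℂ :=
  ⋃ (i : Fin n) (j : Fin n) (_ : i < j),
    { y : ℂ | ‖y - (M i i : ℝ)‖ * ‖y - (M j j : ℝ)‖ ≤
        (∑ k ∈ Finset.univ.filter fun k => k ≠ i, |M i k|) *
        (∑ k ∈ Finset.univ.filter fun k => k ≠ j, |M j k|) }

/-- `cs_j(A)` from Definition 2.3: sorted column sums difference. -/
noncomputable def csCol {n : ℕ} (A : Matrix (Fin n) (Fin n) ℝ) (j : Fin n) : ℝ :=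
  halfSumDiff n (sortDesc (List.ofFn fun i : Fin n => A i j))

/-!
For odd `n` the radius of a second-type disc is `min_t (|t| + ∑_{k ≠ i} |m_ik - t|)`: a total
absolute deviation, minimised at the median.

If `vᵀB = μvᵀ` with `μ ≠ λ₁`, pairing with `Be = λ₁e` gives `∑ v = 0`. Hence `vᵀ` is also a left
eigenvector of `F` and `G`, and any constant `t` may be subtracted from column `j` before the
Gershgorin estimate at a largest coordinate `v_j`; this puts `μ` in the `j`-th discs of `Fᵀ` and `Gᵀ`.

For the inclusion, the two middle off-diagonal entries `a ≤ b` of column `j` are both medians of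
those `2m` entries, so both shifted discs have radius at most the least deviation `Φ`, with centres
`b_jj - a` and `b_jj - b`. By convexity of the norm they lie within `Φ + dist(0, [a, b])` of `b_jj`.
Outside `[a, b]` the deviation grows with slope at least `2`, so `|t| + ∑ |b_ij - t|` is at least
`Φ + dist(0, [a, b])` for every `t`.
-/

noncomputable def absDev (l : List ℝ) (t : ℝ) : ℝ := (l.map fun x => |x - t|).sum

namespace absDev

@[simp] lemma nil (t : ℝ) : absDev [] t = 0 := rfl

@[simp] lemma cons (x : ℝ) (l : List ℝ) (t : ℝ) : absDev (x :: l) t = |x - t| + absDev l t := by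
  simp [absDev]

lemma append (l l' : List ℝ) (t : ℝ) : absDev (l ++ l') t = absDev l t + absDev l' t := by
  simp [absDev]

lemma perm {l l' : List ℝ} (h : l.Perm l') (t : ℝ) : absDev l t = absDev l' t :=
  (h.map _).sum_eq

lemma sum_sub_le (l : List ℝ) (t : ℝ) : l.sum - l.length * t ≤ absDev l t := by
  induction l with
  | nil => simp
  | cons x l ih =>
    simp only [cons, List.sum_cons, List.length_cons]
    push_cast
    linarith [le_abs_self (x - t)]

lemma sub_sum_le (l : List ℝ) (t : ℝ) : l.length * t - l.sum ≤ absDev l t := by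
  induction l with
  | nil => simp
  | cons x l ih =>
    simp only [cons, List.sum_cons, List.length_cons]
    push_cast
    linarith [neg_abs_le (x - t)]

lemma eq_sum_sub {l : List ℝ} {t : ℝ} (h : ∀ x ∈ l, t ≤ x) : absDev l t = l.sum - l.length * t := by
  induction l with
  | nil => simp
  | cons x l ih =>
    simp only [List.forall_mem_cons] at h
    simp only [cons, List.sum_cons, List.length_cons, ih h.2, abs_of_nonneg (sub_nonneg.2 h.1)]
    push_cast; ring

lemma eq_sub_sum {l : List ℝ} {t : ℝ} (h : ∀ x ∈ l, x ≤ t) : absDev l t = l.length * t - l.sum := by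
  induction l with
  | nil => simp
  | cons x l ih =>
    simp only [List.forall_mem_cons] at h
    simp only [cons, List.sum_cons, List.length_cons, ih h.2, abs_of_nonpos (sub_nonpos.2 h.1)]
    push_cast; ring

lemma split (y : List ℝ) (k : ℕ) (t : ℝ) :
    absDev y t = absDev (y.take k) t + absDev (y.drop k) t := by
  rw [← append, List.take_append_drop]

lemma sum_take_sub_sum_drop_le (y : List ℝ) {k : ℕ} (hk : k ≤ y.length) (t : ℝ) :
    (y.take k).sum - (y.drop k).sum + (y.length - 2 * k) * t ≤ absDev y t := by
  have h₁ := sum_sub_le (y.take k) t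
  have h₂ := sub_sum_le (y.drop k) t
  rw [List.length_take_of_le hk] at h₁
  rw [List.length_drop, Nat.cast_sub hk] at h₂
  rw [split y k]
  linarith

lemma eq_sum_take_sub_sum_drop {y : List ℝ} {k : ℕ} (hk : k ≤ y.length) {t : ℝ}
    (h₁ : ∀ x ∈ y.take k, t ≤ x) (h₂ : ∀ x ∈ y.drop k, x ≤ t) :
    absDev y t = (y.take k).sum - (y.drop k).sum + (y.length - 2 * k) * t := by
  rw [split y k, eq_sum_sub h₁, eq_sub_sum h₂, List.length_take_of_le hk, List.length_drop,
    Nat.cast_sub hk]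
  ring

lemma getElem_of_pairwise {y : List ℝ} (hy : y.Pairwise (· ≥ ·)) {k : ℕ} (hk : k < y.length) :
    absDev y y[k] = (y.take k).sum - (y.drop k).sum + (y.length - 2 * k) * y[k] := by
  have hmem : y[k] ∈ y.drop k := by rw [List.drop_eq_getElem_cons hk]; exact List.mem_cons_self
  refine eq_sum_take_sub_sum_drop hk.le (fun x hx => hy.rel_of_mem_take_of_mem_drop hx hmem)
    fun x hx => ?_
  have hd : (y.drop k).Pairwise (· ≥ ·) := hy.sublist (List.drop_sublist k y)
  rw [List.drop_eq_getElem_cons hk] at hx hd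
  rcases List.mem_cons.1 hx with rfl | h
  · exact le_rfl
  · exact List.rel_of_pairwise_cons hd h

end absDev

lemma List.sum_drop_eq_getElem_add (y : List ℝ) {k : ℕ} (hk : k < y.length) :
    (y.drop k).sum = y[k] + (y.drop (k + 1)).sum := by
  rw [List.drop_eq_getElem_cons hk, List.sum_cons]

lemma sortDesc_perm (l : List ℝ) : (sortDesc l).Perm l :=
  (List.reverse_perm _).trans (List.perm_insertionSort _ l)

lemma sortDesc_pairwise (l : List ℝ) : (sortDesc l).Pairwise (· ≥ ·) :=
  List.pairwise_reverse.2 (List.pairwise_insertionSort _ l)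

lemma length_sortDesc (l : List ℝ) : (sortDesc l).length = l.length := by
  rw [sortDesc, List.length_reverse, List.length_insertionSort]

lemma absDev_sortDesc (l : List ℝ) : absDev (sortDesc l) = absDev l :=
  funext (absDev.perm (sortDesc_perm l))

lemma isLeast_absDev_halfSumDiff {l : List ℝ} (hl : Odd l.length) :
    IsLeast (Set.range (absDev l)) (halfSumDiff l.length (sortDesc l)) := by
  obtain ⟨m, hm⟩ := hl
  set y := sortDesc l
  have hy : y.length = 2 * m + 1 := by rw [length_sortDesc, hm]
  have hmy : m < y.length := by omega
  have hhalf : halfSumDiff l.length y = (y.take m).sum - (y.drop (m + 1)).sum := by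
    rw [halfSumDiff, if_pos (by omega), show (l.length - 1) / 2 = m by omega,
      show (l.length + 1) / 2 = m + 1 by omega]
  have hdrop := y.sum_drop_eq_getElem_add hmy
  rw [hhalf, ← absDev_sortDesc]
  refine ⟨⟨y[m], ?_⟩, ?_⟩
  · rw [absDev.getElem_of_pairwise (sortDesc_pairwise l) hmy, hy, hdrop]
    push_cast; ring
  · rintro _ ⟨t, rfl⟩
    have hlow := absDev.sum_take_sub_sum_drop_le y hmy.le t
    have hhigh := absDev.sum_take_sub_sum_drop_le y (k := m + 1) hmy t
    rw [y.sum_take_succ m hmy, hy] at hhigh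
    rw [hdrop, hy] at hlow
    push_cast at hlow hhigh
    linarith

section EvenLength

variable {L : List ℝ} {m : ℕ}

lemma sortDesc_getD_le_getD_pred (hL : L.length = 2 * m) (hm : 0 < m) :
    (sortDesc L).getD m 0 ≤ (sortDesc L).getD (m - 1) 0 := by
  have hlen := length_sortDesc L
  rw [List.getD_eq_getElem _ _ (by omega), List.getD_eq_getElem _ _ (by omega)]
  simpa using (sortDesc_pairwise L).rel_get_of_lt
    (a := ⟨m - 1, by omega⟩) (b := ⟨m, by omega⟩) (by simp; omega)

lemma absDev_sortDesc_getD_eq (hL : L.length = 2 * m) (hm : 0 < m) {k : ℕ}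
    (hk : k = m - 1 ∨ k = m) :
    absDev L ((sortDesc L).getD k 0) = ((sortDesc L).take m).sum - ((sortDesc L).drop m).sum := by
  set y := sortDesc L
  have hy : y.length = 2 * m := by rw [length_sortDesc, hL]
  have hky : k < y.length := by omega
  rw [← absDev_sortDesc, List.getD_eq_getElem _ _ hky,
    absDev.getElem_of_pairwise (sortDesc_pairwise L) hky, hy]
  rcases hk with rfl | rfl
  · have hm1 : m - 1 + 1 = m := by omega
    have htake := y.sum_take_succ (m - 1) hky
    rw [hm1] at htake
    rw [htake, y.sum_drop_eq_getElem_add hky, hm1, Nat.cast_sub (by omega)]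
    push_cast; ring
  · push_cast; ring

lemma add_two_mul_max_le_absDev (hL : L.length = 2 * m) (hm : 0 < m) (t : ℝ) :
    ((sortDesc L).take m).sum - ((sortDesc L).drop m).sum +
        2 * max 0 (max ((sortDesc L).getD m 0 - t) (t - (sortDesc L).getD (m - 1) 0))
      ≤ absDev L t := by
  rw [← absDev_sortDesc]
  set y := sortDesc L
  have hy : y.length = 2 * m := by rw [length_sortDesc, hL]
  have hm1 : m - 1 + 1 = m := by omega
  have hmy : m < y.length := by omega
  have hpy : m - 1 < y.length := by omega
  rw [List.getD_eq_getElem _ _ hmy, List.getD_eq_getElem _ _ hpy]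
  have hmid := absDev.sum_take_sub_sum_drop_le y hmy.le t
  have hright := absDev.sum_take_sub_sum_drop_le y (k := m + 1) hmy t
  have hleft := absDev.sum_take_sub_sum_drop_le y hpy.le t
  have htake := y.sum_take_succ (m - 1) hpy
  have hdrop := y.sum_drop_eq_getElem_add hpy
  rw [hm1] at htake hdrop
  rw [y.sum_take_succ m hmy, hy] at hright
  rw [hy] at hmid
  have hdropm := y.sum_drop_eq_getElem_add hmy
  rw [hy, Nat.cast_sub (by omega)] at hleft
  push_cast at hmid hright hleft
  simp only [max_def]
  split_ifs <;> linarith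

end EvenLength

open Finset

lemma absDev_ofFn_ite {n : ℕ} (g : Fin n → ℝ) (i : Fin n) (t : ℝ) :
    absDev (List.ofFn fun j => if j = i then 0 else g j) t
      = |t| + ∑ j ∈ univ.erase i, |g j - t| := by
  rw [absDev, List.map_ofFn, List.sum_ofFn, ← add_sum_erase _ _ (mem_univ i)]
  simp only [Function.comp_apply, if_pos, zero_sub, abs_neg]
  congr 1
  exact sum_congr rfl fun j hj => by rw [if_neg (ne_of_mem_erase hj)]

lemma absDev_eraseIdx_ofFn {n : ℕ} (g : Fin n → ℝ) (i : Fin n) (t : ℝ) :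
    absDev ((List.ofFn g).eraseIdx i) t = ∑ j ∈ univ.erase i, |g j - t| := by
  have hi : (i : ℕ) < (List.ofFn g).length := by simp
  have hperm : (List.ofFn g).Perm ((List.ofFn g)[(i : ℕ)] :: (List.ofFn g).eraseIdx i) :=
    (List.perm_cons_erase (List.getElem_mem hi)).trans ((List.erase_getElem hi).cons _)
  have hsum := absDev.perm hperm t
  rw [absDev.cons, List.getElem_ofFn, absDev, List.map_ofFn, List.sum_ofFn,
    ← add_sum_erase _ _ (mem_univ i)] at hsum
  simp only [Function.comp_apply] at hsum
  linarith

lemma isLeast_secondTypeRadius {n : ℕ} (hn : Odd n) (M : Matrix (Fin n) (Fin n) ℝ) (i : Fin n) :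
    IsLeast (Set.range fun t => |t| + ∑ j ∈ univ.erase i, |M i j - t|) (secondTypeRadius M i) := by
  have h := isLeast_absDev_halfSumDiff
    (l := List.ofFn fun j : Fin n => if j = i then 0 else M i j) (by rwa [List.length_ofFn])
  rw [List.length_ofFn] at h
  simpa only [secondTypeRadius, Set.range, absDev_ofFn_ite] using h

lemma norm_add_ofReal_le_of_mem_uIcc {w : ℂ} {a b c Φ : ℝ} (ha : ‖w + a‖ ≤ Φ) (hb : ‖w + b‖ ≤ Φ)
    (hc : c ∈ Set.uIcc a b) : ‖w + c‖ ≤ Φ := by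
  have hconv : ConvexOn ℝ Set.univ fun x : ℝ => ‖w + x‖ := by
    simpa [Function.comp_def] using
      (convexOn_univ_norm.translate_right w).comp_linearMap Complex.ofRealLI.toLinearMap
  rw [← segment_eq_uIcc] at hc
  exact (hconv.le_on_segment trivial trivial hc).trans (max_le ha hb)

lemma norm_le_abs_add_of_norm_add_le {w : ℂ} {a b Φ t E : ℝ} (hab : a ≤ b)
    (ha : ‖w + a‖ ≤ Φ) (hb : ‖w + b‖ ≤ Φ) (hE : Φ + 2 * max 0 (max (a - t) (t - b)) ≤ E) :
    ‖w‖ ≤ |t| + E := by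
  set c := max a (min 0 b)
  have hc : ‖w + c‖ ≤ Φ :=
    norm_add_ofReal_le_of_mem_uIcc ha hb (Set.Icc_subset_uIcc ⟨le_max_left _ _, by
      simp only [c, max_le_iff, min_le_iff]; exact ⟨hab, Or.inr le_rfl⟩⟩)
  have hw : ‖w‖ ≤ ‖w + c‖ + |c| := by
    simpa [Complex.norm_real] using norm_sub_le (w + c) c
  have hclamp : |c| ≤ |t| + 2 * max 0 (max (a - t) (t - b)) := by
    rw [abs_le]
    constructor <;>
    · simp only [c, max_def, min_def]
      split_ifs <;> cases abs_cases t <;> linarith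
  linarith

lemma secondTypeRadius_transpose_le_absDev {n : ℕ} (hn : Odd n) {B N : Matrix (Fin n) (Fin n) ℝ}
    {j : Fin n} {c : ℝ} (hN : ∀ i, N i j = B i j - c) :
    secondTypeRadius Nᵀ j ≤ absDev ((List.ofFn fun i => B i j).eraseIdx j) c := by
  have h := (isLeast_secondTypeRadius hn Nᵀ j).2 ⟨0, rfl⟩
  simpa [absDev_eraseIdx_ofFn, hN] using h

lemma secondTypeDisc_inter_subset {n : ℕ} (hodd : Odd n) (hn : 3 ≤ n)
    (B F G : Matrix (Fin n) (Fin n) ℝ)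
    (hF : ∀ i j, F i j = B i j + -kthLargestOffDiag B j ((n - 1) / 2))
    (hG : ∀ i j, G i j = B i j + -kthLargestOffDiag B j ((n + 1) / 2)) (j : Fin n) :
    secondTypeDisc Fᵀ j ∩ secondTypeDisc Gᵀ j ⊆ secondTypeDisc Bᵀ j := by
  have hn2 := Nat.odd_iff.1 hodd
  set m := n / 2
  set L := (List.ofFn fun i => B i j).eraseIdx j
  have hL : L.length = 2 * m := by
    have h : L.length + 1 = (List.ofFn fun i => B i j).length :=
      List.length_eraseIdx_add_one (by simp)
    rw [List.length_ofFn] at h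
    omega
  have hm : 0 < m := by omega
  have hb : kthLargestOffDiag B j ((n - 1) / 2) = (sortDesc L).getD (m - 1) 0 := by
    rw [kthLargestOffDiag, show (n - 1) / 2 - 1 = m - 1 by omega]
  have ha : kthLargestOffDiag B j ((n + 1) / 2) = (sortDesc L).getD m 0 := by
    rw [kthLargestOffDiag, show (n + 1) / 2 - 1 = m by omega]
  have hrF := secondTypeRadius_transpose_le_absDev hodd (N := F) (j := j)
    fun i => (hF i j).trans (by rw [hb, sub_eq_add_neg])
  have hrG := secondTypeRadius_transpose_le_absDev hodd (N := G) (j := j)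
    fun i => (hG i j).trans (by rw [ha, sub_eq_add_neg])
  rw [absDev_sortDesc_getD_eq hL hm (Or.inl rfl)] at hrF
  rw [absDev_sortDesc_getD_eq hL hm (Or.inr rfl)] at hrG
  obtain ⟨t, ht⟩ := (isLeast_secondTypeRadius hodd Bᵀ j).1
  rintro z ⟨hzF, hzG⟩
  simp only [secondTypeDisc, Metric.mem_closedBall, Complex.dist_eq, transpose_apply] at hzF hzG ⊢
  rw [hF, hb] at hzF
  rw [hG, ha] at hzG
  rw [← ht]
  simp only [transpose_apply, ← absDev_eraseIdx_ofFn]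
  refine norm_le_abs_add_of_norm_add_le (w := z - B j j)
    (sortDesc_getD_le_getD_pred hL hm) ?_ ?_ (add_two_mul_max_le_absDev hL hm t)
  · refine le_trans (le_of_eq ?_) (hzG.trans hrG)
    push_cast; ring_nf
  · refine le_trans (le_of_eq ?_) (hzF.trans hrF)
    push_cast; ring_nf

lemma exists_vecMul_eq_smul_of_isEigenvalueC {n : ℕ} {A : Matrix (Fin n) (Fin n) ℝ} {μ : ℂ}
    (h : IsEigenvalueC A μ) : ∃ v ≠ 0, v ᵥ* A.map ((↑) : ℝ → ℂ) = μ • v := by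
  rw [IsEigenvalueC, Polynomial.IsRoot, eval_charpoly, ← exists_vecMul_eq_zero_iff] at h
  obtain ⟨v, hv0, hv⟩ := h
  refine ⟨v, hv0, ?_⟩
  rw [vecMul_sub, sub_eq_zero] at hv
  ext i
  simp [← hv, scalar_apply, vecMul_diagonal, mul_comm]

lemma sum_eq_zero_of_vecMul_eq_smul {ι K : Type*} [Fintype ι] [Field K] {M : Matrix ι ι K}
    {c μ : K} {v : ι → K} (hM : M *ᵥ 1 = c • 1) (hv : v ᵥ* M = μ • v) (hμ : μ ≠ c) :
    ∑ i, v i = 0 := by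
  have h := dotProduct_mulVec v M 1
  rw [hM, hv, dotProduct_smul, smul_dotProduct] at h
  simp only [dotProduct_one, smul_eq_mul] at h
  exact (mul_eq_mul_right_iff.1 h.symm).resolve_left hμ

lemma vecMul_eq_of_sum_eq_zero {ι R : Type*} [Fintype ι] [CommRing R] {M N : Matrix ι ι R}
    {c : ι → R} (hN : ∀ i j, N i j = M i j + c j) {v : ι → R} (hv : ∑ i, v i = 0) :
    v ᵥ* N = v ᵥ* M := by
  ext j
  simp [vecMul, dotProduct, hN, mul_add, Finset.sum_add_distrib, ← Finset.sum_mul, hv]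

lemma exists_forall_norm_le_ne_zero {ι E : Type*} [Finite ι] [NormedAddCommGroup E] {v : ι → E}
    (hv : v ≠ 0) : ∃ i, (∀ k, ‖v k‖ ≤ ‖v i‖) ∧ v i ≠ 0 := by
  obtain ⟨j, hj⟩ := Function.ne_iff.1 hv
  have : Nonempty ι := ⟨j⟩
  obtain ⟨i, hi⟩ := Finite.exists_max fun k => ‖v k‖
  exact ⟨i, hi, norm_pos_iff.1 ((norm_pos_iff.2 hj).trans_le (hi j))⟩

lemma mem_secondTypeDisc_transpose_of_vecMul_eq_smul {n : ℕ} (hn : Odd n)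
    (M : Matrix (Fin n) (Fin n) ℝ) {μ : ℂ} {v : Fin n → ℂ}
    (hv : v ᵥ* M.map ((↑) : ℝ → ℂ) = μ • v) (hsum : ∑ k, v k = 0) {i : Fin n}
    (hmax : ∀ k, ‖v k‖ ≤ ‖v i‖) (hvi : v i ≠ 0) : μ ∈ secondTypeDisc Mᵀ i := by
  obtain ⟨t, ht⟩ := (isLeast_secondTypeRadius hn Mᵀ i).1
  have hcol : ∑ k, v k * M k i = μ * v i := by simpa [vecMul, dotProduct] using congrFun hv i
  have hshift : (μ - M i i + t) * v i = ∑ k ∈ univ.erase i, ((M k i - t : ℝ) : ℂ) * v k := by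
    have hall : ∑ k, ((M k i - t : ℝ) : ℂ) * v k = μ * v i := by
      simp only [Complex.ofReal_sub, sub_mul, sum_sub_distrib, ← mul_sum, hsum, mul_zero,
        sub_zero, ← hcol]
      exact sum_congr rfl fun k _ => mul_comm _ _
    have hsplit := add_sum_erase univ (fun k => ((M k i - t : ℝ) : ℂ) * v k) (mem_univ i)
    push_cast at hsplit hall ⊢
    linear_combination -hsplit - hall
  have hbound : ‖μ - M i i + t‖ ≤ ∑ k ∈ univ.erase i, |M k i - t| := by
    refine le_of_mul_le_mul_right ?_ (norm_pos_iff.2 hvi)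
    calc ‖μ - M i i + t‖ * ‖v i‖
        = ‖∑ k ∈ univ.erase i, ((M k i - t : ℝ) : ℂ) * v k‖ := by rw [← norm_mul, hshift]
      _ ≤ ∑ k ∈ univ.erase i, |M k i - t| * ‖v k‖ := by
        refine (norm_sum_le _ _).trans_eq (sum_congr rfl fun k _ => ?_)
        rw [norm_mul, Complex.norm_real, Real.norm_eq_abs]
      _ ≤ (∑ k ∈ univ.erase i, |M k i - t|) * ‖v i‖ := by
        rw [sum_mul]
        exact sum_le_sum fun k _ => mul_le_mul_of_nonneg_left (hmax k) (abs_nonneg _)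
  rw [secondTypeDisc, Metric.mem_closedBall, Complex.dist_eq, ← ht]
  simp only [transpose_apply]
  calc ‖μ - M i i‖ ≤ ‖μ - M i i + t‖ + ‖(t : ℂ)‖ := by
        simpa using norm_sub_le (μ - M i i + t) t
    _ ≤ |t| + ∑ k ∈ univ.erase i, |M k i - t| := by
        rw [Complex.norm_real, Real.norm_eq_abs]; linarith

/-- Theorem 5: for `n` odd, `n ≥ 3`, and `B` constant row-sum with row
sum `λ₁`, with `F` and `G` built from the negatives of the `((n-1)/2)`-th and
`((n+1)/2)`-th largest off-diagonal column entries, the set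
`S = ⋃_j (D̂_{F,j} ∩ D̂_{G,j})` is contained in the Gershgorin region of the second
type of `Bᵀ` and contains every eigenvalue of `B` other than `λ₁`. -/
theorem stmt5 {n : ℕ} (hodd : Odd n) (hn : 3 ≤ n) (B : Matrix (Fin n) (Fin n) ℝ)
    (lam1 : ℝ) (hB : B *ᵥ (1 : Fin n → ℝ) = lam1 • (1 : Fin n → ℝ))
    (F G : Matrix (Fin n) (Fin n) ℝ)
    (hF : ∀ i j, F i j = B i j + -kthLargestOffDiag B j ((n - 1) / 2))
    (hG : ∀ i j, G i j = B i j + -kthLargestOffDiag B j ((n + 1) / 2))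
    (S : Set ℂ) (hS : S = ⋃ j : Fin n, secondTypeDisc Fᵀ j ∩ secondTypeDisc Gᵀ j) :
    S ⊆ secondTypeRegion Bᵀ ∧
      ∀ mu : ℂ, IsEigenvalueC B mu → mu ≠ (lam1 : ℂ) → mu ∈ S := by
  subst hS
  refine ⟨Set.iUnion_mono fun j => secondTypeDisc_inter_subset hodd hn B F G hF hG j,
    fun mu hmu hne => ?_⟩
  obtain ⟨v, hv0, hv⟩ := exists_vecMul_eq_smul_of_isEigenvalueC hmu
  have hB' : B.map ((↑) : ℝ → ℂ) *ᵥ 1 = (lam1 : ℂ) • 1 := by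
    ext i
    simpa [mulVec, dotProduct] using congrArg Complex.ofReal (congrFun hB i)
  have hsum := sum_eq_zero_of_vecMul_eq_smul hB' hv hne
  obtain ⟨i, hmax, hvi⟩ := exists_forall_norm_le_ne_zero hv0
  have hshift (N : Matrix (Fin n) (Fin n) ℝ) (k : ℕ)
      (hN : ∀ i j, N i j = B i j + -kthLargestOffDiag B j k) :
      mu ∈ secondTypeDisc Nᵀ i := by
    refine mem_secondTypeDisc_transpose_of_vecMul_eq_smul hodd N ?_ hsum hmax hvi
    rw [vecMul_eq_of_sum_eq_zero (M := B.map ((↑) : ℝ → ℂ))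
      (c := fun j => ((-kthLargestOffDiag B j k : ℝ) : ℂ)) (fun _ _ => by simp [hN]) hsum, hv]
  exact Set.mem_iUnion.2 ⟨i, hshift F _ hF, hshift G _ hG⟩
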